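/- arXiv:2306.16136 — 7 statements merged into one kernel-verified Lean document; each statement's English description precedes it below -/
import Mathlib

section
/- Let (A, ‖·‖) be a non-unital normed algebra such that the norm is regular, i.e. ‖a‖ = sup{‖ax‖ : x ∈ A, ‖x‖ ≤ 1} for all a ∈ A, and suppose 0 ∈ closure(convexHull(V_A(a))) for every a ∈ A, where V_A(a) is the spatial numerical range. Then on the unitization A_e, the operator norm and ℓ¹-norm are equivalent: ‖a+λ1‖_op ≤ ‖a+λ1‖₁ ≤ 6e·‖a+λ1‖_op for all a ∈ A, λ ∈ ℂ. -/
/-- The spatial numerical range of `a` in a normed algebra `A` with norm `q`: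
`{φ(ax) : ‖x‖ = 1, ‖φ‖ = 1, φ(x) = 1}`. -/
def spatialNR {A : Type*} [NonUnitalNonAssocRing A] [Module ℂ A]
    (q : A → ℝ) (a : A) : Set ℂ :=
  {z | ∃ (x : A) (φ : A →ₗ[ℂ] ℂ),
    q x = 1 ∧ (∀ y : A, ‖φ y‖ ≤ q y) ∧ φ x = 1 ∧ φ (a * x) = z}

/-- The operator norm on the unitization `A_e` induced by the norm of `A`:
`‖a + λ1‖_op = sup {‖ax + λx‖ : ‖x‖ ≤ 1}`. -/
noncomputable def opU {A : Type*} [NonUnitalNormedRing A] [NormedSpace ℂ A]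
    [IsScalarTower ℂ A A] [SMulCommClass ℂ A A] (z : Unitization ℂ A) : ℝ :=
  sSup {r : ℝ | ∃ x : A, ‖x‖ ≤ 1 ∧ r = ‖z.snd * x + z.fst • x‖}

/-- If `(A, ‖·‖)` is a non-unital normed algebra with regular norm and
`0 ∈ closure (convexHull (V_A a))` for every `a`, then on `A_e` the operator norm and
the ℓ¹-norm are equivalent: `‖a+λ1‖_op ≤ ‖a+λ1‖₁ ≤ 6e‖a+λ1‖_op`. -/
theorem opNorm_equiv_l1Norm_of_zero_mem_numericalRange
    (A : Type*) [NonUnitalNormedRing A] [NormedSpace ℂ A]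
    [IsScalarTower ℂ A A] [SMulCommClass ℂ A A]
    (hA : ¬ ∃ e : A, ∀ x : A, e * x = x ∧ x * e = x)
    (hreg : ∀ a : A, ‖a‖ = sSup {r : ℝ | ∃ x : A, ‖x‖ ≤ 1 ∧ r = ‖a * x‖})
    (hV : ∀ a : A, (0 : ℂ) ∈ closure (convexHull ℝ (spatialNR (‖·‖) a))) :
    ∀ z : Unitization ℂ A,
      opU z ≤ ‖z.snd‖ + ‖z.fst‖ ∧
      ‖z.snd‖ + ‖z.fst‖ ≤ 6 * Real.exp 1 * opU z := by
  intro z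
  set a := z.snd with ha
  set l := z.fst with hl
  have hbdd : BddAbove {r : ℝ | ∃ x : A, ‖x‖ ≤ 1 ∧ r = ‖a * x + l • x‖} := by
    refine ⟨‖a‖ + ‖l‖, ?_⟩
    rintro r ⟨x, hx, rfl⟩
    calc ‖a * x + l • x‖ ≤ ‖a * x‖ + ‖l • x‖ := norm_add_le _ _
      _ ≤ ‖a‖ * ‖x‖ + ‖l‖ * ‖x‖ :=
        add_le_add (norm_mul_le _ _) (le_of_eq (norm_smul _ _))
      _ ≤ ‖a‖ * 1 + ‖l‖ * 1 := by
        gcongr <;> first | exact hx | positivity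
      _ = ‖a‖ + ‖l‖ := by ring
  have hmem : ∀ x : A, ‖x‖ ≤ 1 → ‖a * x + l • x‖ ≤ opU z := by
    intro x hx
    exact le_csSup hbdd ⟨x, hx, rfl⟩
  have h0 : 0 ≤ opU z := by
    have := hmem 0 (by simp)
    simpa using le_trans (norm_nonneg _) this
  have h1 : opU z ≤ ‖a‖ + ‖l‖ := by
    have hne : {r : ℝ | ∃ x : A, ‖x‖ ≤ 1 ∧ r = ‖a * x + l • x‖}.Nonempty :=
      ⟨‖a * (0:A) + l • (0:A)‖, 0, by simp, rfl⟩
    apply csSup_le hne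
    rintro r ⟨x, hx, rfl⟩
    calc ‖a * x + l • x‖ ≤ ‖a * x‖ + ‖l • x‖ := norm_add_le _ _
      _ ≤ ‖a‖ * ‖x‖ + ‖l‖ * ‖x‖ :=
        add_le_add (norm_mul_le _ _) (le_of_eq (norm_smul _ _))
      _ ≤ ‖a‖ * 1 + ‖l‖ * 1 := by
        gcongr <;> first | exact hx | positivity
      _ = ‖a‖ + ‖l‖ := by ring
  -- `|l| ≤ opU z`
  have hlle : ‖l‖ ≤ opU z := by
    have hsub : spatialNR (‖·‖) a ⊆ Metric.closedBall (-l) (opU z) := by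
      rintro w ⟨x, φ, hx1, hφ, hφx, rfl⟩
      rw [Metric.mem_closedBall, dist_eq_norm]
      have key : φ (a * x) - (-l) = φ (a * x + l • x) := by
        rw [map_add, map_smul, hφx, smul_eq_mul, mul_one]
        ring
      rw [key]
      exact le_trans (hφ _) (hmem _ (le_of_eq hx1))
    have hconv : convexHull ℝ (spatialNR (‖·‖) a) ⊆ Metric.closedBall (-l) (opU z) :=
      convexHull_min hsub (convex_closedBall _ _)
    have hcl : closure (convexHull ℝ (spatialNR (‖·‖) a)) ⊆
        Metric.closedBall (-l) (opU z) :=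
      closure_minimal hconv Metric.isClosed_closedBall
    have h := hcl (hV a)
    rw [Metric.mem_closedBall, dist_eq_norm] at h
    simpa using h
  -- `‖a‖ ≤ opU z + ‖l‖`
  have hale : ‖a‖ ≤ opU z + ‖l‖ := by
    rw [hreg a]
    have hne : {r : ℝ | ∃ x : A, ‖x‖ ≤ 1 ∧ r = ‖a * x‖}.Nonempty :=
      ⟨‖a * (0:A)‖, 0, by simp, rfl⟩
    apply csSup_le hne
    rintro r ⟨x, hx, rfl⟩
    have h2 : a * x = (a * x + l • x) - l • x := (add_sub_cancel_right _ _).symm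
    calc ‖a * x‖ = ‖(a * x + l • x) - l • x‖ := by rw [← h2]
      _ ≤ ‖a * x + l • x‖ + ‖l • x‖ := norm_sub_le _ _
      _ ≤ opU z + ‖l‖ * ‖x‖ := add_le_add (hmem x hx) (le_of_eq (norm_smul _ _))
      _ ≤ opU z + ‖l‖ * 1 := by gcongr
      _ = opU z + ‖l‖ := by ring
  refine ⟨h1, ?_⟩
  have hexp : (1 : ℝ) ≤ Real.exp 1 := by
    have := Real.add_one_le_exp (1 : ℝ)
    linarith
  nlinarith [h0, hlle, hale, hexp]
end

section
/- Let (A, ‖·‖) be a non-unital normed algebra with regular norm ‖·‖. If the operator norm ‖·‖_op on the unitization A_e is a Q-norm (i.e. r_{A_e}(x) ≤ ‖x‖_op for all x ∈ A_e), then 0 ∈ closure(convexHull(V_A(a))) for every a ∈ A. -/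
/-! Separating `0` from the closed convex hull of `V_A(a)` by a real functional on `ℂ` turns `a`
into a multiple `b = μ a` whose spatial numerical range lies in `{Re ≥ 1}`. Testing `x - α b x`
against a norming functional gives `‖1 - α b‖_op ≤ (1 + α²‖b‖²) / (1 + α) < 1` for small `α > 0`.
But `α b ∈ A` is not invertible in `A_e`, so `1 ∈ σ(1 - α b)`, and the Q-norm property forces
`‖1 - α b‖_op ≥ 1`. -/

theorem Complex.exists_one_le_re_mul_of_zero_notMem_closure_convexHull {S : Set ℂ}
    (h : (0 : ℂ) ∉ closure (convexHull ℝ S)) : ∃ μ : ℂ, ∀ s ∈ S, 1 ≤ (μ * s).re := by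
  obtain ⟨f, u, hfS, hu⟩ :=
    geometric_hahn_banach_closed_point (convex_convexHull ℝ S).closure isClosed_closure h
  rw [map_zero] at hu
  have hf (s : ℂ) : f s = s.re * f 1 + s.im * f Complex.I := by
    have hs : s = s.re • (1 : ℂ) + s.im • Complex.I := by simp
    rw [hs, map_add, map_smul, map_smul]
    simp
  -- `f s = Re (ν s)` with `ν = -f 1 + i f I`, and `f < u < 0` on `S`
  refine ⟨((-u)⁻¹ : ℝ) * ⟨-f 1, f Complex.I⟩, fun s hs => ?_⟩
  have hsu : f s < u := hfS s (subset_closure (subset_convexHull ℝ S hs))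
  rw [mul_assoc, Complex.re_ofReal_mul, Complex.mul_re, one_le_inv_mul₀ (by linarith)]
  linarith [hf s]

theorem ContinuousLinearMap.abs_re_apply_le {E : Type*} [SeminormedAddCommGroup E]
    [NormedSpace ℂ E] {φ : E →L[ℂ] ℂ} (hφ : ‖φ‖ ≤ 1) (z : E) : |(φ z).re| ≤ ‖z‖ :=
  (Complex.abs_re_le_norm _).trans (φ.le_of_opNorm_le hφ z |>.trans_eq (one_mul _))

theorem spatialNR_smul {A : Type*} [NonUnitalNonAssocRing A] [Module ℂ A]
    [IsScalarTower ℂ A A] (q : A → ℝ) (μ : ℂ) (a : A) :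
    spatialNR q (μ • a) = (μ * ·) '' spatialNR q a := by
  ext s
  simp only [spatialNR, Set.mem_image, Set.mem_ofPred_eq, smul_mul_assoc, map_smul, smul_eq_mul]
  constructor
  · rintro ⟨x, φ, hx, hφ, hφx, rfl⟩
    exact ⟨_, ⟨x, φ, hx, hφ, hφx, rfl⟩, rfl⟩
  · rintro ⟨_, ⟨x, φ, hx, hφ, hφx, rfl⟩, rfl⟩
    exact ⟨x, φ, hx, hφ, hφx, rfl⟩

theorem Unitization.one_mem_spectrum_one_sub_inr {A : Type*} [NonUnitalRing A] [Module ℂ A]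
    [IsScalarTower ℂ A A] [SMulCommClass ℂ A A] (c : A) :
    (1 : ℂ) ∈ spectrum ℂ (1 - (c : Unitization ℂ A)) := by
  rw [← map_one (algebraMap ℂ (Unitization ℂ A)), ← spectrum.singleton_sub_eq]
  exact ⟨1, rfl, 0, zero_mem_spectrum_inr ℂ ℂ c, sub_zero 1⟩

theorem opU_le {A : Type*} [NonUnitalNormedRing A] [NormedSpace ℂ A]
    [IsScalarTower ℂ A A] [SMulCommClass ℂ A A] {z : Unitization ℂ A} {C : ℝ}
    (h : ∀ x : A, ‖x‖ ≤ 1 → ‖z.snd * x + z.fst • x‖ ≤ C) : opU z ≤ C :=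
  csSup_le ⟨_, 0, by simp, rfl⟩ (by rintro _ ⟨x, hx, rfl⟩; exact h x hx)

section RealPartBoundedBelow

variable {A : Type*} [NonUnitalNormedRing A] [NormedSpace ℂ A] [SMulCommClass ℂ A A] {b : A}

theorem norm_le_re_apply_mul_self (hb : ∀ s ∈ spatialNR (‖·‖) b, 1 ≤ s.re)
    {φ : A →L[ℂ] ℂ} (hφ : ‖φ‖ ≤ 1) {y : A} (hφy : φ y = ‖y‖) :
    ‖y‖ ≤ (φ (b * y)).re := by
  rcases eq_or_ne y 0 with rfl | hy
  · simp
  have hy₀ : 0 < ‖y‖ := norm_pos_iff.mpr hy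
  set w : A := ((‖y‖⁻¹ : ℝ) : ℂ) • y
  have hmem : φ (b * w) ∈ spatialNR (‖·‖) b := by
    refine ⟨w, φ.toLinearMap, ?_, fun x => ?_, ?_, rfl⟩
    · change ‖w‖ = 1
      rw [norm_smul, Complex.norm_real, norm_inv, norm_norm, inv_mul_cancel₀ hy₀.ne']
    · simpa using φ.le_of_opNorm_le hφ x
    · simp [w, hφy, hy₀.ne']
  have := hb _ hmem
  rwa [mul_smul_comm, map_smul, smul_eq_mul, Complex.re_ofReal_mul,
    one_le_inv_mul₀ hy₀] at this

theorem norm_sub_smul_mul_le (hb : ∀ s ∈ spatialNR (‖·‖) b, 1 ≤ s.re) {α : ℝ} (hα : 0 ≤ α)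
    (x : A) :
    (1 + α) * ‖x - (α : ℂ) • (b * x)‖ ≤ (1 + α ^ 2 * ‖b‖ ^ 2) * ‖x‖ := by
  set y := x - (α : ℂ) • (b * x)
  obtain ⟨φ, hφ, hφy⟩ := exists_dual_vector'' ℂ y
  have hy : ‖y‖ ≤ (φ (b * y)).re := norm_le_re_apply_mul_self hb hφ hφy
  have hx : (φ x).re = ‖y‖ + α * (φ (b * x)).re := by
    have : x = y + (α : ℂ) • (b * x) := (sub_add_cancel _ _).symm
    conv_lhs => rw [this]
    simp [hφy]
  have hbx : (φ (b * x)).re = (φ (b * y)).re + α * (φ (b * (b * x))).re := by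
    simp [y, mul_sub, mul_smul_comm]
  have hbbx : ‖b * (b * x)‖ ≤ ‖b‖ ^ 2 * ‖x‖ :=
    calc ‖b * (b * x)‖ ≤ ‖b‖ * (‖b‖ * ‖x‖) :=
          (norm_mul_le _ _).trans (by gcongr; exact norm_mul_le _ _)
      _ = ‖b‖ ^ 2 * ‖x‖ := by ring
  have h1 := abs_le.mp (φ.abs_re_apply_le hφ (b * (b * x)))
  have h2 := abs_le.mp (φ.abs_re_apply_le hφ x)
  -- ‖x‖ ≥ Re φ x = ‖y‖ + α Re φ(bx) and Re φ(bx) = Re φ(by) + α Re φ(b²x) ≥ ‖y‖ - α ‖b‖² ‖x‖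
  nlinarith [mul_le_mul_of_nonneg_left hbbx (sq_nonneg α)]

theorem opU_one_sub_inr_smul_lt_one [IsScalarTower ℂ A A]
    (hb : ∀ s ∈ spatialNR (‖·‖) b, 1 ≤ s.re)
    {α : ℝ} (hα : 0 < α) (hαb : α * ‖b‖ ^ 2 < 1) :
    opU ((1 : Unitization ℂ A) - Unitization.inr ((α : ℂ) • b)) < 1 := by
  calc opU ((1 : Unitization ℂ A) - Unitization.inr ((α : ℂ) • b))
      ≤ (1 + α ^ 2 * ‖b‖ ^ 2) / (1 + α) := by
        refine opU_le fun x hx => ?_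
        rw [le_div_iff₀ (by positivity), mul_comm]
        convert (norm_sub_smul_mul_le hb hα.le x).trans
          (mul_le_of_le_one_right (by positivity) hx) using 3
        simp [smul_mul_assoc, sub_eq_neg_add]
    _ < 1 := by
        rw [div_lt_one (by positivity)]
        nlinarith

end RealPartBoundedBelow

theorem zero_mem_numericalRange_of_opNorm_QNorm_general
    (A : Type*) [NonUnitalNormedRing A] [NormedSpace ℂ A]
    [IsScalarTower ℂ A A] [SMulCommClass ℂ A A]
    (hQ : ∀ z : Unitization ℂ A,
      (⨆ k ∈ spectrum ℂ z, (‖k‖₊ : ENNReal)) ≤ ENNReal.ofReal (opU z)) :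
    ∀ a : A, (0 : ℂ) ∈ closure (convexHull ℝ (spatialNR (‖·‖) a)) := by
  intro a
  by_contra h0
  obtain ⟨μ, hμ⟩ := Complex.exists_one_le_re_mul_of_zero_notMem_closure_convexHull h0
  set b := μ • a
  have hb : ∀ s ∈ spatialNR (‖·‖) b, 1 ≤ s.re := by
    rw [spatialNR_smul]
    rintro _ ⟨s, hs, rfl⟩
    exact hμ s hs
  set α := (1 + ‖b‖ ^ 2)⁻¹
  have hα : 0 < α := by positivity
  have hαb : α * ‖b‖ ^ 2 < 1 := by
    rw [inv_mul_lt_one₀ (by positivity)]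
    linarith
  set z := (1 : Unitization ℂ A) - Unitization.inr ((α : ℂ) • b)
  have hz : (1 : ENNReal) ≤ ENNReal.ofReal (opU z) := by
    refine le_trans ?_ (hQ z)
    simpa using le_iSup₂ (f := fun k (_ : k ∈ spectrum ℂ z) => (‖k‖₊ : ENNReal)) 1
      (Unitization.one_mem_spectrum_one_sub_inr _)
  exact (opU_one_sub_inr_smul_lt_one hb hα hαb).not_ge (ENNReal.one_le_ofReal.mp hz)

/-- If `(A, ‖·‖)` is a non-unital normed algebra with regular norm and the operator
norm on the unitization `A_e` is a Q-norm (the spectral radius is dominated by it),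
then `0 ∈ closure (convexHull (V_A a))` for every `a ∈ A`. -/
theorem zero_mem_numericalRange_of_opNorm_QNorm
    (A : Type*) [NonUnitalNormedRing A] [NormedSpace ℂ A]
    [IsScalarTower ℂ A A] [SMulCommClass ℂ A A]
    (hA : ¬ ∃ e : A, ∀ x : A, e * x = x ∧ x * e = x)
    (hreg : ∀ a : A, ‖a‖ = sSup {r : ℝ | ∃ x : A, ‖x‖ ≤ 1 ∧ r = ‖a * x‖})
    (hQ : ∀ z : Unitization ℂ A,
      (⨆ k ∈ spectrum ℂ z, (‖k‖₊ : ENNReal)) ≤ ENNReal.ofReal (opU z)) :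
    ∀ a : A, (0 : ℂ) ∈ closure (convexHull ℝ (spatialNR (‖·‖) a)) :=
  zero_mem_numericalRange_of_opNorm_QNorm_general A hQ
end

section
/- Let A be a non-unital faithful algebra and let |·| be a minimal submultiplicative norm on A, i.e. any submultiplicative norm |||·||| on A with |||·||| ≤ |·| is equivalent to |·|. Then the operator norm |·|_op on A_e is a minimal submultiplicative norm on the unitization A_e. -/
/-- A submultiplicative algebra norm on a (possibly non-unital) complex algebra. -/
structure AlgNorm (A : Type*) [NonUnitalRing A] [Module ℂ A]
    extends RingNorm A where
  smul' : ∀ (c : ℂ) (x : A), toFun (c • x) = ‖c‖ * toFun x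

def AlgNorm.comap {A B : Type*} [NonUnitalRing A] [Module ℂ A] [NonUnitalRing B] [Module ℂ B]
    (q : AlgNorm B) (f : A →ₙₐ[ℂ] B) (hf : Function.Injective f) : AlgNorm A where
  toFun a := q.toRingNorm (f a)
  map_zero' := by simp
  add_le' a b := by simpa only [map_add] using map_add_le_add q.toRingNorm (f a) (f b)
  neg' a := by simp only [map_neg, map_neg_eq_map]
  mul_le' a b := by simpa only [map_mul] using map_mul_le_mul q.toRingNorm (f a) (f b)
  eq_zero_of_map_eq_zero' a ha := hf <| by
    simpa only [map_zero] using (map_eq_zero_iff_eq_zero q.toRingNorm).mp ha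
  smul' c a := by rw [map_smul]; exact q.smul' c (f a)

theorem Unitization.inr_snd_mul_add_fst_smul {R A : Type*} [CommSemiring R]
    [NonUnitalSemiring A] [Module R A] (z : Unitization R A) (x : A) :
    ((z.snd * x + z.fst • x : A) : Unitization R A) = z * x := by
  ext
  · simp
  · simp [add_comm]

section Unitization

variable {A : Type*} [NonUnitalNormedRing A] [NormedSpace ℂ A]
  [IsScalarTower ℂ A A] [SMulCommClass ℂ A A]

theorem opU_le_of_forall_norm_le {z : Unitization ℂ A} {c : ℝ}
    (h : ∀ x : A, ‖x‖ ≤ 1 → ‖z.snd * x + z.fst • x‖ ≤ c) : opU z ≤ c :=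
  csSup_le ⟨_, 0, by simp, rfl⟩ fun _ ⟨x, hx, hr⟩ => hr ▸ h x hx

theorem opU_inr_le (a : A) : opU (a : Unitization ℂ A) ≤ ‖a‖ :=
  opU_le_of_forall_norm_le fun x hx => by
    simpa using (norm_mul_le a x).trans (mul_le_of_le_one_right (norm_nonneg a) hx)

/-- For `‖x‖ ≤ 1`, `‖ax + λx‖ = q((a + λ1) x) ≤ q(a + λ1) ‖x‖`. -/
theorem opU_le_of_inr_eq (q : AlgNorm (Unitization ℂ A))
    (hq : ∀ x : A, q.toRingNorm x = ‖x‖) (z : Unitization ℂ A) : opU z ≤ q.toRingNorm z :=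
  opU_le_of_forall_norm_le fun x hx =>
    calc ‖z.snd * x + z.fst • x‖ = q.toRingNorm (z * x) := by
          rw [← hq, Unitization.inr_snd_mul_add_fst_smul]
      _ ≤ q.toRingNorm z * ‖x‖ := hq x ▸ map_mul_le_mul q.toRingNorm z x
      _ ≤ q.toRingNorm z := mul_le_of_le_one_right (apply_nonneg _ z) hx

end Unitization

theorem opNorm_minimal_of_minimal_general
    (A : Type*) [NonUnitalNormedRing A] [NormedSpace ℂ A]
    [IsScalarTower ℂ A A] [SMulCommClass ℂ A A]
    (hmin : ∀ p : AlgNorm A, (∀ x : A, p.toRingNorm x ≤ ‖x‖) →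
      ∀ x : A, p.toRingNorm x = ‖x‖) :
    ∀ q : AlgNorm (Unitization ℂ A),
      (∀ z : Unitization ℂ A, q.toRingNorm z ≤ opU z) →
      ∀ z : Unitization ℂ A, q.toRingNorm z = opU z := by
  intro q hq
  have hq_inr : ∀ x : A, q.toRingNorm x = ‖x‖ :=
    hmin (q.comap (Unitization.inrNonUnitalAlgHom ℂ A) Unitization.inr_injective)
      fun x => (hq x).trans (opU_inr_le x)
  exact fun z => (hq z).antisymm (opU_le_of_inr_eq q hq_inr z)

/-- If `A` is a non-unital faithful algebra and its norm `|·|` is a minimal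
submultiplicative norm (any algebra norm dominated by it equals it), then the induced
operator norm `|·|_op` on the unitization `A_e` is a minimal norm on `A_e`. -/
theorem opNorm_minimal_of_minimal
    (A : Type*) [NonUnitalNormedRing A] [NormedSpace ℂ A]
    [IsScalarTower ℂ A A] [SMulCommClass ℂ A A]
    (hA : ¬ ∃ e : A, ∀ x : A, e * x = x ∧ x * e = x)
    (hfaith : ∀ a : A, (∀ x : A, a * x = 0) → a = 0)
    (hmin : ∀ p : AlgNorm A, (∀ x : A, p.toRingNorm x ≤ ‖x‖) →
      ∀ x : A, p.toRingNorm x = ‖x‖) :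
    ∀ q : AlgNorm (Unitization ℂ A),
      (∀ z : Unitization ℂ A, q.toRingNorm z ≤ opU z) →
      ∀ z : Unitization ℂ A, q.toRingNorm z = opU z :=
  opNorm_minimal_of_minimal_general A hmin
end

section
/- Let A be a non-unital algebra, A_e its unitization, and |·| an algebra norm on A_e such that the restriction of |·| to A is a Q-norm on A (r_A(a) ≤ |a| for all a ∈ A) and A is closed in (A_e, |·|). Then |·| is a Q-norm on A_e: r_{A_e}(x) ≤ |x| for all x ∈ A_e. -/
/-! Since `A` is closed and has no unit, `1` is at positive distance `δ` from `A`, so the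
character `a + λ1 ↦ λ` satisfies `|λ| ≤ δ⁻¹ |a + λ1|`. As `σ(a + λ1) = λ + σ(a)` and `|·|` is
a Q-norm on `A`, this gives `r(x) ≤ C |x|` on `A_e` with a constant `C`; applying this to `xⁿ`
and taking `n`-th roots removes `C`. -/

open scoped ENNReal

lemma iSup₂_nnnorm_le_ofReal_iff {𝕜 : Type*} [NormedField 𝕜] {s : Set 𝕜} {r : ℝ}
    (hr : 0 ≤ r) :
    (⨆ k ∈ s, (‖k‖₊ : ℝ≥0∞)) ≤ ENNReal.ofReal r ↔ ∀ k ∈ s, ‖k‖ ≤ r := by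
  simp only [iSup₂_le_iff, ← ENNReal.ofReal_coe_nnreal, coe_nnnorm,
    ENNReal.ofReal_le_ofReal_iff hr]

lemma le_of_forall_pow_le_mul_pow {x y C : ℝ} (hy : 0 ≤ y)
    (h : ∀ n : ℕ, 0 < n → x ^ n ≤ C * y ^ n) : x ≤ y := by
  by_contra! hyx
  rcases hy.eq_or_lt with rfl | hy
  · have h1 := h 1 one_pos
    simp only [pow_one, mul_zero] at h1
    exact h1.not_gt hyx
  · have hxy : 1 < x / y := (one_lt_div hy).mpr hyx
    obtain ⟨n, hn⟩ := pow_unbounded_of_one_lt C hxy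
    have hle : (x / y) ^ (n + 1) ≤ C := by
      rw [div_pow, div_le_iff₀ (pow_pos hy _)]
      exact h (n + 1) n.succ_pos
    exact hle.not_gt (hn.trans_le (pow_le_pow_right₀ hxy.le n.le_succ))

/-- Apply the bound to `z ^ n` and take `n`-th roots. -/
theorem norm_le_of_mem_spectrum_of_forall_norm_le_mul {𝕜 B F : Type*} [NormedField 𝕜] [Ring B]
    [Algebra 𝕜 B] [FunLike F B ℝ] [RingSeminormClass F B ℝ] (p : F) {C : ℝ} (hC : 0 ≤ C)
    (h : ∀ z : B, ∀ k ∈ spectrum 𝕜 z, ‖k‖ ≤ C * p z) {z : B} {k : 𝕜}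
    (hk : k ∈ spectrum 𝕜 z) : ‖k‖ ≤ p z :=
  le_of_forall_pow_le_mul_pow (apply_nonneg p z) fun n hn =>
    calc ‖k‖ ^ n = ‖k ^ n‖ := (norm_pow k n).symm
      _ ≤ C * p (z ^ n) := h _ _ (spectrum.pow_mem_pow z n hk)
      _ ≤ C * p z ^ n := mul_le_mul_of_nonneg_left (map_pow_le_pow p z hn.ne') hC

namespace Unitization

variable {R A : Type*} [CommRing R] [NonUnitalRing A] [Module R A]

/-- A closed non-unital subalgebra stays away from `1`: were `1` a limit of elements of `A`,
it would lie in `A` and be a unit of `A`. -/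
lemma exists_pos_le_apply_inr_add_one (f : Unitization R A → ℝ)
    (hA : ¬ ∃ e : A, ∀ x : A, e * x = x ∧ x * e = x)
    (hclosed : ∀ z : Unitization R A,
      (∀ ε > (0 : ℝ), ∃ a : A, f (z - (a : Unitization R A)) < ε) →
      ∃ a : A, z = (a : Unitization R A)) :
    ∃ δ > (0 : ℝ), ∀ a : A, δ ≤ f ((a : Unitization R A) + 1) := by
  by_contra! h
  obtain ⟨e, he⟩ := hclosed 1 fun ε hε => by
    obtain ⟨a, ha⟩ := h ε hε
    exact ⟨-a, by rwa [inr_neg, sub_neg_eq_add, add_comm]⟩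
  refine hA ⟨e, fun x => ⟨inr_injective (R := R) ?_, inr_injective (R := R) ?_⟩⟩
  · rw [inr_mul, ← he, one_mul]
  · rw [inr_mul, ← he, mul_one]

variable [IsScalarTower R A A] [SMulCommClass R A A]

lemma sub_fst_mem_spectrum_inr_snd {z : Unitization R A} {k : R} (hk : k ∈ spectrum R z) :
    k - z.fst ∈ spectrum R (z.snd : Unitization R A) := by
  rw [← inl_fst_add_inr_snd_eq z, ← algebraMap_eq_inl, ← spectrum.singleton_add_eq] at hk
  obtain ⟨_, rfl, l, hl, rfl⟩ := hk
  simpa using hl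

end Unitization

namespace AlgNorm

lemma map_smul {A : Type*} [NonUnitalRing A] [Module ℂ A] (p : AlgNorm A) (c : ℂ) (x : A) :
    p.toRingNorm (c • x) = ‖c‖ * p.toRingNorm x :=
  p.smul' c x

variable {A : Type*} [NonUnitalRing A] [Module ℂ A] [IsScalarTower ℂ A A] [SMulCommClass ℂ A A]
  (p : AlgNorm (Unitization ℂ A))

/-- Continuity of the character `a + λ1 ↦ λ`, read off from `a + λ1 = λ • (λ⁻¹ • a + 1)`. -/
lemma mul_norm_fst_le {δ : ℝ} (hδ : ∀ a : A, δ ≤ p.toRingNorm ((a : Unitization ℂ A) + 1))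
    (z : Unitization ℂ A) : δ * ‖z.fst‖ ≤ p.toRingNorm z := by
  rcases eq_or_ne z.fst 0 with h0 | h0
  · simp [h0, apply_nonneg p.toRingNorm z]
  · have hz : z = z.fst • (((z.fst⁻¹ • z.snd : A) : Unitization ℂ A) + 1) := by
      ext <;> simp [smul_smul, h0]
    calc δ * ‖z.fst‖
        ≤ ‖z.fst‖ * p.toRingNorm (((z.fst⁻¹ • z.snd : A) : Unitization ℂ A) + 1) := by
          rw [mul_comm]; exact mul_le_mul_of_nonneg_left (hδ _) (norm_nonneg _)
      _ = p.toRingNorm z := by rw [← p.map_smul, ← hz]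

lemma map_inr_snd_le (z : Unitization ℂ A) :
    p.toRingNorm (z.snd : Unitization ℂ A) ≤ p.toRingNorm z + ‖z.fst‖ * p.toRingNorm 1 := by
  have hz : (z.snd : Unitization ℂ A) = z - z.fst • 1 := by
    rw [← Algebra.algebraMap_eq_smul_one, Unitization.algebraMap_eq_inl]
    exact eq_sub_of_add_eq' z.inl_fst_add_inr_snd_eq
  rw [hz, ← p.map_smul]
  exact map_sub_le_add _ _ _

lemma norm_le_mul_of_mem_spectrum {δ : ℝ} (hδ : 0 < δ)
    (hδA : ∀ a : A, δ ≤ p.toRingNorm ((a : Unitization ℂ A) + 1))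
    (hQA : ∀ a : A, ∀ k ∈ spectrum ℂ (a : Unitization ℂ A), ‖k‖ ≤ p.toRingNorm a)
    {z : Unitization ℂ A} {k : ℂ} (hk : k ∈ spectrum ℂ z) :
    ‖k‖ ≤ (1 + δ⁻¹ * (1 + p.toRingNorm 1)) * p.toRingNorm z := by
  have hsnd := hQA z.snd _ (Unitization.sub_fst_mem_spectrum_inr_snd hk)
  have hfst : ‖z.fst‖ ≤ δ⁻¹ * p.toRingNorm z :=
    (le_inv_mul_iff₀ hδ).mpr (p.mul_norm_fst_le hδA z)
  calc ‖k‖ ≤ ‖k - z.fst‖ + ‖z.fst‖ := norm_le_norm_sub_add k z.fst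
    _ ≤ p.toRingNorm z + ‖z.fst‖ * (1 + p.toRingNorm 1) := by
        linarith [p.map_inr_snd_le z]
    _ ≤ p.toRingNorm z + δ⁻¹ * p.toRingNorm z * (1 + p.toRingNorm 1) := by gcongr
    _ = (1 + δ⁻¹ * (1 + p.toRingNorm 1)) * p.toRingNorm z := by ring

end AlgNorm

/-- If `|·|` is an algebra norm on the unitization `A_e` of a non-unital algebra `A`
whose restriction to `A` is a Q-norm, and `A` is closed in `(A_e, |·|)`, then `|·|` is
a Q-norm on all of `A_e`. -/
theorem QNorm_unitization_of_QNorm_closed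
    (A : Type*) [NonUnitalRing A] [Module ℂ A]
    [IsScalarTower ℂ A A] [SMulCommClass ℂ A A]
    (hA : ¬ ∃ e : A, ∀ x : A, e * x = x ∧ x * e = x)
    (p : AlgNorm (Unitization ℂ A))
    (hQA : ∀ a : A,
      (⨆ k ∈ quasispectrum ℂ a, (‖k‖₊ : ENNReal)) ≤
        ENNReal.ofReal (p.toRingNorm (a : Unitization ℂ A)))
    (hclosed : ∀ z : Unitization ℂ A,
      (∀ ε > (0 : ℝ), ∃ a : A, p.toRingNorm (z - (a : Unitization ℂ A)) < ε) →
      ∃ a : A, z = (a : Unitization ℂ A)) :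
    ∀ z : Unitization ℂ A,
      (⨆ k ∈ spectrum ℂ z, (‖k‖₊ : ENNReal)) ≤ ENNReal.ofReal (p.toRingNorm z) := by
  obtain ⟨δ, hδ, hδA⟩ := Unitization.exists_pos_le_apply_inr_add_one _ hA hclosed
  have hQA' : ∀ a : A, ∀ k ∈ spectrum ℂ (a : Unitization ℂ A), ‖k‖ ≤ p.toRingNorm a := by
    intro a
    rw [← iSup₂_nnnorm_le_ofReal_iff (apply_nonneg _ _),
      ← Unitization.quasispectrum_eq_spectrum_inr]
    exact hQA a
  intro z
  rw [iSup₂_nnnorm_le_ofReal_iff (apply_nonneg _ _)]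
  have hC : 0 ≤ 1 + δ⁻¹ * (1 + p.toRingNorm 1) := by positivity
  exact fun k => norm_le_of_mem_spectrum_of_forall_norm_le_mul p.toRingNorm hC
    fun _ _ => p.norm_le_mul_of_mem_spectrum hδ hδA hQA'
end

section
/- Let A be a non-unital semisimple Banach algebra with the spectral extension property (every submultiplicative algebra norm on A is a Q-norm). Then A has the P-property: every nonzero closed (two-sided) ideal I of A contains an element a with r_{pA}(a) > 0, where r_{pA}(a) = inf{|a| : |·| is a submultiplicative algebra norm on A} is the permanent radius. -/
/-- The spectral radius in a non-unital complex algebra, via the quasispectrum. -/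
noncomputable def quasiRadius {A : Type*} [NonUnitalRing A] [Module ℂ A]
    [IsScalarTower ℂ A A] [SMulCommClass ℂ A A] (a : A) : ENNReal :=
  ⨆ k ∈ quasispectrum ℂ a, (‖k‖₊ : ENNReal)

/-- The permanent radius of `a`: the infimum of `|a|` over all algebra norms. -/
noncomputable def permRadius {A : Type*} [NonUnitalRing A] [Module ℂ A]
    (a : A) : ℝ :=
  sInf {r : ℝ | ∃ p : AlgNorm A, r = p.toRingNorm a}

/-!
The spectral extension property bounds the spectral radius by every algebra norm, hence by the
permanent radius. So if the permanent radius vanished on a nonzero ideal `I ∋ b`, the spectral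
radius would vanish on all of `A * b`, putting `b` in the radical, which is zero.
-/

namespace AlgNorm

noncomputable def ofNorm (A : Type*) [NonUnitalNormedRing A] [NormedSpace ℂ A] : AlgNorm A where
  toFun := norm
  map_zero' := norm_zero
  add_le' := norm_add_le
  neg' := norm_neg
  mul_le' := norm_mul_le
  eq_zero_of_map_eq_zero' _ := norm_eq_zero.mp
  smul' := norm_smul

end AlgNorm

theorem quasiRadius_le_ofReal_permRadius {A : Type*} [NonUnitalRing A] [Module ℂ A]
    [IsScalarTower ℂ A A] [SMulCommClass ℂ A A] [Nonempty (AlgNorm A)]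
    (hSEP : ∀ p : AlgNorm A, ∀ a : A, quasiRadius a ≤ ENNReal.ofReal (p.toRingNorm a))
    (a : A) : quasiRadius a ≤ ENNReal.ofReal (permRadius a) := by
  obtain ⟨p₀⟩ := ‹Nonempty (AlgNorm A)›
  have hfin : quasiRadius a ≠ ⊤ := ne_top_of_le_ne_top ENNReal.ofReal_ne_top (hSEP p₀ a)
  rw [← ENNReal.ofReal_toReal hfin]
  refine ENNReal.ofReal_le_ofReal (le_csInf ⟨_, p₀, rfl⟩ ?_)
  rintro _ ⟨p, rfl⟩
  exact ENNReal.toReal_le_of_le_ofReal (apply_nonneg _ _) (hSEP p a)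

theorem pProperty_of_SEP_general
    (A : Type*) [NonUnitalNormedRing A] [NormedSpace ℂ A]
    [IsScalarTower ℂ A A] [SMulCommClass ℂ A A]
    (hss : ∀ a : A, (∀ x : A, quasiRadius (x * a) = 0) → a = 0)
    (hSEP : ∀ p : AlgNorm A, ∀ a : A,
      quasiRadius a ≤ ENNReal.ofReal (p.toRingNorm a)) :
    ∀ I : TwoSidedIdeal A, IsClosed (I : Set A) → (∃ b : A, b ∈ I ∧ b ≠ 0) →
      ∃ a : A, a ∈ I ∧ 0 < permRadius a := by
  rintro I - ⟨b, hbI, hb0⟩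
  by_contra! hI
  have : Nonempty (AlgNorm A) := ⟨AlgNorm.ofNorm A⟩
  refine hb0 (hss b fun x => le_antisymm ?_ zero_le)
  calc quasiRadius (x * b) ≤ ENNReal.ofReal (permRadius (x * b)) :=
        quasiRadius_le_ofReal_permRadius hSEP _
    _ = 0 := ENNReal.ofReal_eq_zero.mpr (hI _ (I.mul_mem_left x b hbI))

/-- A non-unital semisimple Banach algebra with the spectral extension property has the
P-property: every nonzero closed two-sided ideal contains an element of strictly
positive permanent radius. -/
theorem pProperty_of_SEP
    (A : Type*) [NonUnitalNormedRing A] [NormedSpace ℂ A]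
    [IsScalarTower ℂ A A] [SMulCommClass ℂ A A] [CompleteSpace A]
    (hA : ¬ ∃ e : A, ∀ x : A, e * x = x ∧ x * e = x)
    (hss : ∀ a : A, (∀ x : A, quasiRadius (x * a) = 0) → a = 0)
    (hSEP : ∀ p : AlgNorm A, ∀ a : A,
      quasiRadius a ≤ ENNReal.ofReal (p.toRingNorm a)) :
    ∀ I : TwoSidedIdeal A, IsClosed (I : Set A) → (∃ b : A, b ∈ I ∧ b ≠ 0) →
      ∃ a : A, a ∈ I ∧ 0 < permRadius a :=
  pProperty_of_SEP_general A hss hSEP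
end

section
/- Let ω(n) = e^{−n²} and for each k ∈ ℕ define ‖f‖_k = Σ_{n=1}^∞ |f(n)| e^{−n²−2nk} for f ∈ ℓ¹(ℕ, ω). Then each ‖·‖_k is a submultiplicative algebra norm on the convolution algebra ℓ¹(ℕ, ω), and for k < l one has ‖·‖_l ≤ ‖·‖_k but the two norms are not equivalent; in particular ℓ¹(ℕ, ω) admits a strictly decreasing chain of pairwise inequivalent algebra norms and hence has no minimal norm below ‖·‖₀ and fails the P-property. -/
set_option maxHeartbeats 1000000

open Filter Topology

/-- Convolution product on the additive semigroup `ℕ`: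
`(f * g) n = ∑_{i + j = n} f i * g j`. -/
noncomputable def conv (f g : ℕ → ℂ) : ℕ → ℂ :=
  fun n => ∑ i ∈ Finset.range (n + 1), f i * g (n - i)

/-- The norm `‖f‖ₖ = ∑ |f n| e^{-n² - 2nk}` on `ℓ¹(ℕ, ω)`, `ω n = e^{-n²}`. -/
noncomputable def wNormK (k : ℕ) (f : ℕ → ℂ) : ℝ :=
  ∑' n : ℕ, ‖f n‖ * Real.exp (-(n : ℝ) ^ 2 - 2 * n * k)

lemma wfun_le (k n : ℕ) : Real.exp (-(n : ℝ) ^ 2 - 2 * n * k) ≤ Real.exp (-(n : ℝ) ^ 2) := by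
  apply Real.exp_le_exp.2; nlinarith [Nat.cast_nonneg (α := ℝ) n, Nat.cast_nonneg (α := ℝ) k]

lemma summ_k (k : ℕ) {f : ℕ → ℂ} (hf : Summable fun n : ℕ => ‖f n‖ * Real.exp (-(n : ℝ) ^ 2)) :
    Summable fun n : ℕ => ‖f n‖ * Real.exp (-(n : ℝ) ^ 2 - 2 * n * k) := by
  apply hf.of_nonneg_of_le
  · intro n; positivity
  · intro n; exact mul_le_mul_of_nonneg_left (wfun_le k n) (norm_nonneg _)

lemma wsubmul (k a b : ℕ) :
    Real.exp (-((a + b : ℕ) : ℝ) ^ 2 - 2 * ((a + b : ℕ) : ℝ) * k) ≤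
      Real.exp (-(a : ℝ) ^ 2 - 2 * a * k) * Real.exp (-(b : ℝ) ^ 2 - 2 * b * k) := by
  rw [← Real.exp_add]
  apply Real.exp_le_exp.2
  push_cast
  nlinarith [Nat.cast_nonneg (α := ℝ) a, Nat.cast_nonneg (α := ℝ) b]

/-- In `ℓ¹(ℕ, ω)` with `ω n = e^{-n²}`, each `‖·‖ₖ` is a submultiplicative algebra norm
for the convolution product; for `k < l`, `‖·‖ₗ ≤ ‖·‖ₖ` but the two norms are not
equivalent; and `inf_k ‖δₙ‖ₖ = 0` for each `n ≥ 1`, so `ℓ¹(ℕ, ω)` admits a strictly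
decreasing chain of pairwise inequivalent algebra norms with no minimal norm below
them, and fails the P-property. -/
theorem weighted_l1_norm_chain (k l : ℕ) (hkl : k < l) :
    (∀ f : ℕ → ℂ, f 0 = 0 →
      (Summable fun n : ℕ => ‖f n‖ * Real.exp (-(n : ℝ) ^ 2)) →
      (wNormK k f = 0 → f = 0)) ∧
    (∀ f g : ℕ → ℂ, f 0 = 0 → g 0 = 0 →
      (Summable fun n : ℕ => ‖f n‖ * Real.exp (-(n : ℝ) ^ 2)) →
      (Summable fun n : ℕ => ‖g n‖ * Real.exp (-(n : ℝ) ^ 2)) →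
      wNormK k (conv f g) ≤ wNormK k f * wNormK k g) ∧
    (∀ f : ℕ → ℂ, f 0 = 0 →
      (Summable fun n : ℕ => ‖f n‖ * Real.exp (-(n : ℝ) ^ 2)) →
      wNormK l f ≤ wNormK k f) ∧
    (¬ ∃ C : ℝ, 0 < C ∧ ∀ f : ℕ → ℂ, f 0 = 0 →
      (Summable fun n : ℕ => ‖f n‖ * Real.exp (-(n : ℝ) ^ 2)) →
      wNormK k f ≤ C * wNormK l f) ∧
    (∀ n : ℕ, 1 ≤ n →
      Tendsto (fun j : ℕ => wNormK j (fun m => if m = n then 1 else 0))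
        atTop (𝓝 0)) := by
  have deltaNorm : ∀ (j n : ℕ),
      wNormK j (fun m => if m = n then 1 else 0) = Real.exp (-(n : ℝ) ^ 2 - 2 * n * j) := by
    intro j n
    unfold wNormK
    rw [tsum_eq_single n]
    · simp
    · intro m hm; simp [hm]
  refine ⟨?_, ?_, ?_, ?_, ?_⟩
  · -- norm zero implies zero
    intro f _ hf h0
    have hs := summ_k k hf
    funext n
    have hnonneg : ∀ m : ℕ, 0 ≤ ‖f m‖ * Real.exp (-(m : ℝ) ^ 2 - 2 * m * k) := by
      intro m; positivity
    have hle : ‖f n‖ * Real.exp (-(n : ℝ) ^ 2 - 2 * n * k) ≤ wNormK k f :=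
      Summable.le_tsum hs n fun j _ => hnonneg j
    have h0' : ‖f n‖ * Real.exp (-(n : ℝ) ^ 2 - 2 * n * k) = 0 :=
      le_antisymm (h0 ▸ hle) (hnonneg n)
    have hexp : Real.exp (-(n : ℝ) ^ 2 - 2 * n * k) ≠ 0 := (Real.exp_pos _).ne'
    have : ‖f n‖ = 0 := by
      rcases mul_eq_zero.1 h0' with h | h
      · exact h
      · exact absurd h hexp
    simpa using this
  · -- submultiplicative
    intro f g _ _ hf hg
    set F : ℕ → ℝ := fun n => ‖f n‖ * Real.exp (-(n : ℝ) ^ 2 - 2 * n * k) with hFdef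
    set G : ℕ → ℝ := fun n => ‖g n‖ * Real.exp (-(n : ℝ) ^ 2 - 2 * n * k) with hGdef
    have hF : Summable F := summ_k k hf
    have hG : Summable G := summ_k k hg
    have hFn : Summable fun n => ‖F n‖ := by
      apply hF.congr; intro n; rw [Real.norm_of_nonneg (by positivity)]
    have hGn : Summable fun n => ‖G n‖ := by
      apply hG.congr; intro n; rw [Real.norm_of_nonneg (by positivity)]
    have key : ∀ n : ℕ, ‖conv f g n‖ * Real.exp (-(n : ℝ) ^ 2 - 2 * n * k) ≤
        ∑ i ∈ Finset.range (n + 1), F i * G (n - i) := by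
      intro n
      calc ‖conv f g n‖ * Real.exp (-(n : ℝ) ^ 2 - 2 * n * k)
          ≤ (∑ i ∈ Finset.range (n + 1), ‖f i‖ * ‖g (n - i)‖) *
              Real.exp (-(n : ℝ) ^ 2 - 2 * n * k) := by
            apply mul_le_mul_of_nonneg_right _ (Real.exp_pos _).le
            refine (norm_sum_le _ _).trans ?_
            apply Finset.sum_le_sum; intro i _; rw [norm_mul]
        _ = ∑ i ∈ Finset.range (n + 1),
              ‖f i‖ * ‖g (n - i)‖ * Real.exp (-(n : ℝ) ^ 2 - 2 * n * k) := by
            rw [Finset.sum_mul]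
        _ ≤ ∑ i ∈ Finset.range (n + 1), F i * G (n - i) := by
            apply Finset.sum_le_sum
            intro i hi
            have hin : i ≤ n := Nat.lt_succ_iff.1 (Finset.mem_range.1 hi)
            have hab : i + (n - i) = n := Nat.add_sub_cancel' hin
            have := wsubmul k i (n - i)
            rw [hab] at this
            calc ‖f i‖ * ‖g (n - i)‖ * Real.exp (-(n : ℝ) ^ 2 - 2 * n * k)
                ≤ ‖f i‖ * ‖g (n - i)‖ *
                  (Real.exp (-(i : ℝ) ^ 2 - 2 * i * k) *
                    Real.exp (-((n - i : ℕ) : ℝ) ^ 2 - 2 * ((n - i : ℕ) : ℝ) * k)) := by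
                  exact mul_le_mul_of_nonneg_left this (by positivity)
              _ = F i * G (n - i) := by simp only [hFdef, hGdef]; ring
    have hsum : Summable fun n => ∑ i ∈ Finset.range (n + 1), F i * G (n - i) := by
      have := summable_norm_sum_mul_range_of_summable_norm hFn hGn
      apply this.congr
      intro n
      rw [Real.norm_of_nonneg]
      exact Finset.sum_nonneg fun i _ => mul_nonneg (by positivity) (by positivity)
    have hL : Summable fun n => ‖conv f g n‖ * Real.exp (-(n : ℝ) ^ 2 - 2 * n * k) :=
      hsum.of_nonneg_of_le (fun n => by positivity) key
    unfold wNormK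
    calc (∑' n : ℕ, ‖conv f g n‖ * Real.exp (-(n : ℝ) ^ 2 - 2 * n * k)) ≤ ∑' n, ∑ i ∈ Finset.range (n + 1), F i * G (n - i) :=
          Summable.tsum_le_tsum key hL hsum
      _ = wNormK k f * wNormK k g :=
          (tsum_mul_tsum_eq_tsum_sum_range_of_summable_norm hFn hGn).symm
  · -- monotone
    intro f _ hf
    unfold wNormK
    apply Summable.tsum_le_tsum _ (summ_k l hf) (summ_k k hf)
    intro n
    apply mul_le_mul_of_nonneg_left _ (norm_nonneg _)
    apply Real.exp_le_exp.2
    have : (n : ℝ) * k ≤ n * l := by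
      apply mul_le_mul_of_nonneg_left _ (Nat.cast_nonneg n)
      exact_mod_cast hkl.le
    linarith
  · -- not equivalent
    rintro ⟨C, hC, hCle⟩
    set n : ℕ := max 1 ⌈C⌉₊ with hn
    have hn1 : 1 ≤ n := le_max_left _ _
    have hδ : ∀ m : ℕ, ‖(if m = n then (1:ℂ) else 0)‖ * Real.exp (-(m : ℝ) ^ 2) =
        if m = n then Real.exp (-(n : ℝ) ^ 2) else 0 := by
      intro m; by_cases h : m = n <;> simp [h]
    have hsumδ : Summable fun m : ℕ =>
        ‖(if m = n then (1:ℂ) else 0)‖ * Real.exp (-(m : ℝ) ^ 2) := by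
      apply Summable.congr _ fun m => (hδ m).symm
      exact summable_of_ne_finset_zero (s := {n}) (fun m hm => by
        simp at hm; simp [hm])
    have h0 : (if (0:ℕ) = n then (1:ℂ) else 0) = 0 := by
      have : (0:ℕ) ≠ n := by omega
      simp [this]
    have := hCle (fun m => if m = n then 1 else 0) h0 hsumδ
    rw [deltaNorm k n, deltaNorm l n] at this
    -- this : exp(-n²-2nk) ≤ C * exp(-n²-2nl)
    have hexp : Real.exp (2 * (n : ℝ) * (l - k)) ≤ C := by
      have hpos : (0:ℝ) < Real.exp (-(n : ℝ) ^ 2 - 2 * n * l) := Real.exp_pos _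
      have hd : Real.exp (-(n : ℝ) ^ 2 - 2 * n * k) / Real.exp (-(n : ℝ) ^ 2 - 2 * n * l) ≤ C :=
        (div_le_iff₀ hpos).2 this
      calc Real.exp (2 * (n : ℝ) * (l - k))
          = Real.exp (-(n : ℝ) ^ 2 - 2 * n * k) / Real.exp (-(n : ℝ) ^ 2 - 2 * n * l) := by
            rw [← Real.exp_sub]; ring_nf
        _ ≤ C := hd
    have hlk : (1:ℝ) ≤ (l : ℝ) - (k : ℝ) := by
      have : k + 1 ≤ l := hkl
      have := (Nat.cast_le (α := ℝ)).2 this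
      push_cast at this; linarith
    have hnC : C ≤ (n : ℝ) := by
      calc C ≤ (⌈C⌉₊ : ℝ) := Nat.le_ceil C
        _ ≤ (n : ℝ) := by exact_mod_cast le_max_right 1 ⌈C⌉₊
    have hbig : C < Real.exp (2 * (n : ℝ) * ((l : ℝ) - k)) := by
      have h1n : (1:ℝ) ≤ (n : ℝ) := by exact_mod_cast hn1
      have : 2 * (n : ℝ) * ((l : ℝ) - k) + 1 ≤ Real.exp (2 * (n : ℝ) * ((l : ℝ) - k)) :=
        Real.add_one_le_exp _
      nlinarith
    linarith
  · -- tendsto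
    intro n hn
    have h2n : Real.exp (-(2 * (n : ℝ))) < 1 := by
      rw [Real.exp_lt_one_iff]
      have : (1:ℝ) ≤ (n : ℝ) := by exact_mod_cast hn
      linarith
    have heq : (fun j : ℕ => wNormK j (fun m => if m = n then 1 else 0)) =
        fun j : ℕ => Real.exp (-(n : ℝ) ^ 2) * Real.exp (-(2 * (n : ℝ))) ^ j := by
      funext j
      rw [deltaNorm j n, ← Real.exp_nat_mul, ← Real.exp_add]
      ring_nf
    rw [heq]
    have := tendsto_pow_atTop_nhds_zero_of_lt_one (Real.exp_pos _).le h2n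
    simpa using this.const_mul (Real.exp (-(n : ℝ) ^ 2))
end

section
/- Let (A, ‖·‖) be a non-unital semisimple Banach algebra with the spectral extension property. Suppose that every algebra norm on A_e majorizes a minimal algebra norm, and that for every minimal algebra norm |·| on A_e one has |·|_op ≅ |·|₁ (the operator and ℓ¹-norms on A_e induced by the restriction of |·| to A are equivalent). Then A_e has the spectral extension property: every algebra norm on A_e is a Q-norm. -/
variable {A : Type*} [NonUnitalNormedRing A] [NormedSpace ℂ A]
  [IsScalarTower ℂ A A] [SMulCommClass ℂ A A]

/-- The operator norm on `A_e` induced by the restriction to `A` of a norm `q` on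
`A_e`: `|a + λ1|_op = sup {|ax + λx| : |x| ≤ 1}`. -/
noncomputable def qOp (q : AlgNorm (Unitization ℂ A)) (z : Unitization ℂ A) : ℝ :=
  sSup {r : ℝ | ∃ x : A, q.toRingNorm (x : Unitization ℂ A) ≤ 1 ∧
    r = q.toRingNorm (z * (x : Unitization ℂ A))}

/-- The ℓ¹-norm on `A_e` induced by the restriction to `A` of a norm `q` on `A_e`:
`|a + λ1|₁ = |a| + |λ|`. -/
noncomputable def qL1 (q : AlgNorm (Unitization ℂ A)) (z : Unitization ℂ A) : ℝ :=
  q.toRingNorm ((z.snd : A) : Unitization ℂ A) + ‖z.fst‖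

/-- A norm is minimal if every algebra norm dominated by it coincides with it. -/
def IsMinimalNorm (q : AlgNorm (Unitization ℂ A)) : Prop :=
  ∀ r : AlgNorm (Unitization ℂ A), (∀ z, r.toRingNorm z ≤ q.toRingNorm z) →
    ∀ z, r.toRingNorm z = q.toRingNorm z

/-!
Take a minimal norm `q ≤ p`. Writing `z = λ1 + a`, every point of the spectrum of `z` is
`λ + ν` with `ν` in the quasispectrum of `a`, so the spectral extension property of `A`,
applied to the restriction of `q`, gives `|k| ≤ |λ| + q a = |z|₁ ≤ C |z|_op ≤ C q z`.
Applying this to `zⁿ` and `kⁿ` and taking `n`-th roots removes the constant `C`.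
-/

open Filter Topology

lemma le_of_forall_pow_succ_le_mul_pow_succ {a b C : ℝ} (hb : 0 ≤ b)
    (h : ∀ n : ℕ, a ^ (n + 1) ≤ C * b ^ (n + 1)) : a ≤ b := by
  by_contra! hab
  have ha : 0 < a := hb.trans_lt hab
  have hlim : Tendsto (fun n : ℕ => C * (b / a) ^ (n + 1)) atTop (𝓝 0) := by
    simpa using ((tendsto_pow_atTop_nhds_zero_of_lt_one (div_nonneg hb ha.le)
      ((div_lt_one ha).2 hab)).comp (tendsto_add_atTop_nat 1)).const_mul C
  obtain ⟨n, hn⟩ := (hlim.eventually (gt_mem_nhds one_pos)).exists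
  have : 1 ≤ C * (b / a) ^ (n + 1) := by
    rw [div_pow, ← mul_div_assoc, le_div_iff₀ (pow_pos ha _), one_mul]
    exact h n
  exact hn.not_ge this

lemma Unitization.sub_fst_mem_quasispectrum_snd {R B : Type*} [CommRing R] [NonUnitalRing B]
    [Module R B] [IsScalarTower R B B] [SMulCommClass R B B] {w : Unitization R B} {k : R}
    (hk : k ∈ spectrum R w) : k - w.fst ∈ quasispectrum R w.snd := by
  rw [Unitization.quasispectrum_eq_spectrum_inr, ← spectrum.add_mem_add_iff (s := w.fst),
    sub_add_cancel, Unitization.algebraMap_eq_inl, Unitization.inl_fst_add_inr_snd_eq]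
  exact hk

section NonUnital

variable {B : Type*} [NonUnitalRing B] [Module ℂ B] [IsScalarTower ℂ B B] [SMulCommClass ℂ B B]

noncomputable def AlgNorm.restrict (q : AlgNorm (Unitization ℂ B)) : AlgNorm B where
  toFun x := q.toRingNorm (x : Unitization ℂ B)
  map_zero' := by simp
  add_le' x y := by
    simpa [Unitization.inr_add] using map_add_le_add q.toRingNorm (x : Unitization ℂ B) y
  neg' x := by simp [Unitization.inr_neg]
  mul_le' x y := by
    simpa [Unitization.inr_mul] using map_mul_le_mul q.toRingNorm (x : Unitization ℂ B) y
  eq_zero_of_map_eq_zero' x hx :=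
    Unitization.inr_injective (by simpa using q.toRingNorm.eq_zero_of_map_eq_zero' _ hx)
  smul' c x := by
    simp only [Unitization.inr_smul]
    exact q.smul' c (x : Unitization ℂ B)

lemma norm_le_of_quasiRadius_le_ofReal {a : B} {ν : ℂ} {r : ℝ} (hr : 0 ≤ r)
    (hν : ν ∈ quasispectrum ℂ a) (ha : quasiRadius a ≤ ENNReal.ofReal r) : ‖ν‖ ≤ r := by
  have h : (‖ν‖₊ : ENNReal) ≤ ENNReal.ofReal r :=
    (le_iSup₂ (f := fun k (_ : k ∈ quasispectrum ℂ a) => (‖k‖₊ : ENNReal)) ν hν).trans ha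
  rwa [← ENNReal.ofReal_coe_nnreal, coe_nnnorm, ENNReal.ofReal_le_ofReal_iff hr] at h

end NonUnital

lemma norm_le_qL1_of_mem_spectrum {q : AlgNorm (Unitization ℂ A)}
    (hSEP : ∀ a : A, quasiRadius a ≤ ENNReal.ofReal (q.restrict.toRingNorm a))
    {w : Unitization ℂ A} {k : ℂ} (hk : k ∈ spectrum ℂ w) : ‖k‖ ≤ qL1 q w := by
  have hν : ‖k - w.fst‖ ≤ q.restrict.toRingNorm w.snd :=
    norm_le_of_quasiRadius_le_ofReal (apply_nonneg _ _)
      (Unitization.sub_fst_mem_quasispectrum_snd hk) (hSEP w.snd)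
  calc ‖k‖ ≤ ‖w.fst‖ + ‖k - w.fst‖ := norm_le_insert' k w.fst
    _ ≤ ‖w.fst‖ + q.restrict.toRingNorm w.snd := by gcongr
    _ = qL1 q w := add_comm _ _

lemma qOp_le (q : AlgNorm (Unitization ℂ A)) (z : Unitization ℂ A) :
    qOp q z ≤ q.toRingNorm z := by
  refine Real.sSup_le ?_ (apply_nonneg _ _)
  rintro r ⟨x, hx, rfl⟩
  calc q.toRingNorm (z * (x : Unitization ℂ A))
      ≤ q.toRingNorm z * q.toRingNorm (x : Unitization ℂ A) := map_mul_le_mul _ _ _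
    _ ≤ q.toRingNorm z := mul_le_of_le_one_right (apply_nonneg _ _) hx

theorem spectralRadius_le_of_qL1_le_mul_qOp {q : AlgNorm (Unitization ℂ A)}
    (hSEP : ∀ a : A, quasiRadius a ≤ ENNReal.ofReal (q.restrict.toRingNorm a))
    {C : ℝ} (hC0 : 0 ≤ C) (hC : ∀ w, qL1 q w ≤ C * qOp q w) (z : Unitization ℂ A) :
    spectralRadius ℂ z ≤ ENNReal.ofReal (q.toRingNorm z) := by
  refine iSup₂_le fun k hk => ?_
  have hpow (n : ℕ) : ‖k‖ ^ (n + 1) ≤ C * q.toRingNorm z ^ (n + 1) :=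
    calc ‖k‖ ^ (n + 1) = ‖k ^ (n + 1)‖ := (norm_pow k _).symm
      _ ≤ qL1 q (z ^ (n + 1)) :=
          norm_le_qL1_of_mem_spectrum hSEP (spectrum.pow_image_subset z _ ⟨k, hk, rfl⟩)
      _ ≤ C * qOp q (z ^ (n + 1)) := hC _
      _ ≤ C * q.toRingNorm z ^ (n + 1) := by
          gcongr
          exact (qOp_le q _).trans (map_pow_le_pow _ z n.succ_ne_zero)
  rw [← ENNReal.ofReal_coe_nnreal, coe_nnnorm]
  exact ENNReal.ofReal_le_ofReal
    (le_of_forall_pow_succ_le_mul_pow_succ (apply_nonneg _ _) hpow)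

theorem sep_unitization_of_opNorm_equiv_l1Norm_general
    (A : Type*) [NonUnitalNormedRing A] [NormedSpace ℂ A]
    [IsScalarTower ℂ A A] [SMulCommClass ℂ A A]
    (hSEP : ∀ p : AlgNorm A, ∀ a : A,
      quasiRadius a ≤ ENNReal.ofReal (p.toRingNorm a))
    (hmin : ∀ p : AlgNorm (Unitization ℂ A), ∃ q : AlgNorm (Unitization ℂ A),
      (∀ z, q.toRingNorm z ≤ p.toRingNorm z) ∧ IsMinimalNorm q)
    (hequiv : ∀ q : AlgNorm (Unitization ℂ A), IsMinimalNorm q →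
      ∃ C : ℝ, 0 < C ∧ ∀ z : Unitization ℂ A,
        qOp q z ≤ C * qL1 q z ∧ qL1 q z ≤ C * qOp q z) :
    ∀ p : AlgNorm (Unitization ℂ A), ∀ z : Unitization ℂ A,
      (⨆ k ∈ spectrum ℂ z, (‖k‖₊ : ENNReal)) ≤ ENNReal.ofReal (p.toRingNorm z) := by
  intro p z
  obtain ⟨q, hqp, hqmin⟩ := hmin p
  obtain ⟨C, hC0, hC⟩ := hequiv q hqmin
  calc spectralRadius ℂ z
      ≤ ENNReal.ofReal (q.toRingNorm z) :=
        spectralRadius_le_of_qL1_le_mul_qOp (hSEP q.restrict) hC0.le (fun w => (hC w).2) z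
    _ ≤ ENNReal.ofReal (p.toRingNorm z) := ENNReal.ofReal_le_ofReal (hqp z)

/-- Let `A` be a non-unital semisimple Banach algebra with the spectral extension
property.  If every algebra norm on `A_e` majorizes a minimal norm and, for every
minimal norm `|·|` on `A_e`, the induced operator and ℓ¹-norms on `A_e` are equivalent,
then `A_e` has the spectral extension property. -/
theorem sep_unitization_of_opNorm_equiv_l1Norm
    (A : Type*) [NonUnitalNormedRing A] [NormedSpace ℂ A]
    [IsScalarTower ℂ A A] [SMulCommClass ℂ A A] [CompleteSpace A]
    (hA : ¬ ∃ e : A, ∀ x : A, e * x = x ∧ x * e = x)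
    (hss : ∀ a : A, (∀ x : A, quasiRadius (x * a) = 0) → a = 0)
    (hSEP : ∀ p : AlgNorm A, ∀ a : A,
      quasiRadius a ≤ ENNReal.ofReal (p.toRingNorm a))
    (hmin : ∀ p : AlgNorm (Unitization ℂ A), ∃ q : AlgNorm (Unitization ℂ A),
      (∀ z, q.toRingNorm z ≤ p.toRingNorm z) ∧ IsMinimalNorm q)
    (hequiv : ∀ q : AlgNorm (Unitization ℂ A), IsMinimalNorm q →
      ∃ C : ℝ, 0 < C ∧ ∀ z : Unitization ℂ A,
        qOp q z ≤ C * qL1 q z ∧ qL1 q z ≤ C * qOp q z) :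
    ∀ p : AlgNorm (Unitization ℂ A), ∀ z : Unitization ℂ A,
      (⨆ k ∈ spectrum ℂ z, (‖k‖₊ : ENNReal)) ≤ ENNReal.ofReal (p.toRingNorm z) :=
  sep_unitization_of_opNorm_equiv_l1Norm_general A hSEP hmin hequiv
end
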